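/- arXiv:2602.09831 — 3 statements merged into one kernel-verified Lean document; each statement's English description precedes it below -/
import Mathlib

section
/- Fix integers r ≥ 0 and 0 ≤ i ≤ r+1. Write B(n,k) for the Gaussian binomial coefficient binom(n,k)_t evaluated at t = −q (with the convention B(n,k) = 0 if k < 0 or k > n), and C(n) = n(n−1)/2. Then in ℤ[q]: (q^{2r+1} + (−q)^{r−i})·(−q)^{C(r−i)}·B(r,i) + (−q)^r(q+1)·(−q)^{C(r−i+1)}·B(r,i−1) + (1 − (−q)^{r−i+2})·(−q)^{C(r−i+2)}·B(r,i−2) = (1 − (−q)^{r+1})·(−q)^{C(r−i+1)}·B(r+1,i), where any summand containing an out-of-range binomial coefficient is understood to be zero. -/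
open Polynomial

/-- The Gaussian binomial coefficient `binom(n,k)_t` as a polynomial in `t`, defined via the
`q`-Pascal rule; this agrees with the product formula `∏_{j=1}^k (1−t^{n−k+j})/(1−t^j)`. -/
noncomputable def gbinom : ℕ → ℕ → Polynomial ℤ
  | _, 0 => 1
  | 0, _ + 1 => 0
  | n + 1, k + 1 => gbinom n k + Polynomial.X ^ (k + 1) * gbinom n (k + 1)

/-- `B(n,k)`: the Gaussian binomial evaluated at `t = −q`, with the convention
`B(n,k) = 0` if `k < 0` or `k > n`. -/
noncomputable def Bnq (n : ℕ) (k : ℤ) : Polynomial ℤ :=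
  if 0 ≤ k ∧ k ≤ (n : ℤ) then Polynomial.aeval (-(X : Polynomial ℤ)) (gbinom n k.toNat) else 0

/-- `C(n) = n(n−1)/2` as a natural number (this is `≥ 0` for every integer `n`). -/
def Cexp (n : ℤ) : ℕ := (n * (n - 1) / 2).toNat

lemma gbinom_zero (n : ℕ) : gbinom n 0 = 1 := by cases n <;> rfl

lemma gbinom_succ (n k : ℕ) :
    gbinom (n+1) (k+1) = gbinom n k + X ^ (k+1) * gbinom n (k+1) := rfl

lemma gbinom_of_lt : ∀ {n k : ℕ}, n < k → gbinom n k = 0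
  | 0, _+1, _ => rfl
  | n+1, k+1, h => by
      rw [gbinom_succ, gbinom_of_lt (by omega : n < k), gbinom_of_lt (by omega : n < k+1)]; ring

lemma gbinom_self : ∀ n : ℕ, gbinom n n = 1
  | 0 => rfl
  | n+1 => by rw [gbinom_succ, gbinom_self n, gbinom_of_lt (by omega : n < n+1)]; ring

lemma gbinom_one (n : ℕ) : (1 - X) * gbinom (n+1) 1 = 1 - X^(n+1) := by
  induction n with
  | zero =>
      rw [show (1:ℕ) = 0 + 1 from rfl, gbinom_succ, gbinom_zero, gbinom_of_lt (by omega : 0 < 1)]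
      ring
  | succ n ih =>
      rw [show gbinom (n+2) 1 = gbinom (n+1) 0 + X^1 * gbinom (n+1) 1 from rfl, gbinom_zero]
      linear_combination X * ih

lemma gbinom_two : ∀ n : ℕ, (1 - X) * gbinom (n+1) n = 1 - X^(n+1)
  | 0 => by rw [gbinom_zero]; ring
  | n+1 => by
      rw [gbinom_succ, gbinom_self]
      linear_combination gbinom_two n

lemma gbinom_ratio_aux : ∀ (s a b : ℕ), a + b ≤ s →
    (1 - X^(b+1)) * gbinom (a+b+1) (b+1) = (1 - X^(a+1)) * gbinom (a+b+1) b := by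
  intro s
  induction s with
  | zero =>
      intro a b h
      obtain ⟨rfl, rfl⟩ : a = 0 ∧ b = 0 := by omega
      simp only [Nat.zero_add]
      rw [gbinom_self]
      linear_combination -gbinom_two 0
  | succ s ih =>
      intro a b h
      match a, b with
      | 0, b =>
          simp only [Nat.zero_add]
          rw [gbinom_self]
          linear_combination -gbinom_two b
      | a+1, 0 =>
          rw [gbinom_zero, show a+1+0+1 = (a+1)+1 from rfl]
          linear_combination gbinom_one (a+1)
      | a+1, b+1 =>
          have E1 := ih (a+1) b (by omega)
          have E2 := ih a (b+1) (by omega)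
          rw [show a+1+(b+1)+1 = (a+b+2)+1 from by omega] at *
          rw [show a+1+b+1 = a+b+2 from by omega] at E1
          rw [show a+(b+1)+1 = a+b+2 from by omega] at E2
          rw [gbinom_succ (a+b+2) (b+1), gbinom_succ (a+b+2) b]
          linear_combination X^(b+2) * E2 + E1

lemma gbinom_ratio (a b : ℕ) :
    (1 - X^(b+1)) * gbinom (a+b+1) (b+1) = (1 - X^(a+1)) * gbinom (a+b+1) b :=
  gbinom_ratio_aux (a+b) a b le_rfl

lemma core1 (m : ℕ) :
    (1 - X^(m+3)) * gbinom (m+1) 1 + X^(m+1) * (1-X) = (1 - X^(m+2)) * gbinom (m+2) 1 := by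
  rw [show gbinom (m+2) 1 = gbinom (m+1) 0 + X^1 * gbinom (m+1) 1 from rfl, gbinom_zero]
  linear_combination gbinom_one m

lemma core2 (m j : ℕ) :
    (1 - X^(m+2*j+5)) * gbinom (m+j+2) (j+2) + X^(m+j+2) * (1-X) * gbinom (m+j+2) (j+1)
      + (1 - X^(m+2)) * X^(m+1) * gbinom (m+j+2) j
      = (1 - X^(m+j+3)) * gbinom (m+j+3) (j+2) := by
  have P1 : gbinom (m+j+3) (j+2) = gbinom (m+j+2) (j+1) + X^(j+2) * gbinom (m+j+2) (j+2) :=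
    gbinom_succ (m+j+2) (j+1)
  have R1 := gbinom_ratio m (j+1)
  have R2 := gbinom_ratio (m+1) j
  rw [show m+(j+1)+1 = m+j+2 from by omega] at R1
  rw [show m+1+j+1 = m+j+2 from by omega] at R2
  linear_combination (-(1 - X^(m+j+3))) * P1 + R1 - X^(m+1) * R2


lemma Bnq_eq (n k : ℕ) (h : k ≤ n) :
    Bnq n k = aeval (-(X:Polynomial ℤ)) (gbinom n k) := by
  rw [Bnq, if_pos ⟨Int.natCast_nonneg k, by exact_mod_cast h⟩, Int.toNat_natCast]

lemma Bnq_neg (n : ℕ) (k : ℤ) (h : k < 0 ∨ (n:ℤ) < k) : Bnq n k = 0 := by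
  rw [Bnq, if_neg (by omega)]

lemma Cexp_aux (n : ℕ) : ∃ a : ℤ, (n:ℤ)*((n:ℤ)-1) = 2*a ∧ 0 ≤ a := by
  obtain ⟨a, ha⟩ := Int.even_mul_succ_self ((n:ℤ)-1)
  have ha' : (n:ℤ)*((n:ℤ)-1) = 2*a := by linear_combination ha
  refine ⟨a, ha', ?_⟩
  have hnn : 0 ≤ (n:ℤ) * ((n:ℤ)-1) := by
    rcases n with _ | k
    · simp
    · apply mul_nonneg (by positivity)
      push_cast; omega
  omega

lemma Cexp_s1 (n : ℕ) : Cexp ((n:ℤ)+1) = Cexp n + n := by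
  obtain ⟨a, ha, ha2⟩ := Cexp_aux n
  unfold Cexp
  have hB : ((n:ℤ)+1)*((n:ℤ)+1-1) = 2*a + 2*n := by linear_combination ha
  omega

lemma Cexp_s2 (n : ℕ) : Cexp ((n:ℤ)+2) = Cexp n + 2*n + 1 := by
  obtain ⟨a, ha, ha2⟩ := Cexp_aux n
  unfold Cexp
  have hC : ((n:ℤ)+2)*((n:ℤ)+2-1) = 2*a + 4*n + 2 := by linear_combination ha
  omega

lemma oddX (r : ℕ) : (X:Polynomial ℤ)^(2*r+1) = -(-X:Polynomial ℤ)^(2*r+1) := by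
  rw [Odd.neg_pow ⟨r, by ring⟩]; ring


/-- the Pascal-type identity
`(q^{2r+1} + (−q)^{r−i})(−q)^{C(r−i)}B(r,i) + (−q)^r(q+1)(−q)^{C(r−i+1)}B(r,i−1)
 + (1 − (−q)^{r−i+2})(−q)^{C(r−i+2)}B(r,i−2) = (1 − (−q)^{r+1})(−q)^{C(r−i+1)}B(r+1,i)`
in `ℤ[q]`, for `0 ≤ i ≤ r+1` (out-of-range binomials vanish; the integer exponents
`r−i` and `r−i+2` are interpreted via `Int.toNat`, which only matters in summands
whose binomial coefficient vanishes). -/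
theorem stmt9 (r i : ℕ) (hi : i ≤ r + 1) :
    ((X : Polynomial ℤ) ^ (2 * r + 1) + (-(X : Polynomial ℤ)) ^ (((r : ℤ) - i).toNat)) *
          (-(X : Polynomial ℤ)) ^ Cexp ((r : ℤ) - i) * Bnq r i +
        (-(X : Polynomial ℤ)) ^ r * ((X : Polynomial ℤ) + 1) *
          (-(X : Polynomial ℤ)) ^ Cexp ((r : ℤ) - i + 1) * Bnq r ((i : ℤ) - 1) +
        (1 - (-(X : Polynomial ℤ)) ^ (((r : ℤ) - i + 2).toNat)) *
          (-(X : Polynomial ℤ)) ^ Cexp ((r : ℤ) - i + 2) * Bnq r ((i : ℤ) - 2) =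
      (1 - (-(X : Polynomial ℤ)) ^ (r + 1)) *
        (-(X : Polynomial ℤ)) ^ Cexp ((r : ℤ) - i + 1) * Bnq (r + 1) i := by
  have hX1 : (X:Polynomial ℤ) + 1 = 1 - (-X) := by ring
  rcases (by omega : i = 0 ∨ i = r + 1 ∨ (i = 1 ∧ 1 ≤ r) ∨ (2 ≤ i ∧ i ≤ r)) with
    rfl | rfl | ⟨rfl, hr⟩ | ⟨h2, hr⟩
  · -- i = 0
    simp only [Nat.cast_zero, sub_zero, zero_sub]
    rw [Bnq_neg r (-1) (by omega), Bnq_neg r (-2) (by omega),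
      show Bnq r 0 = 1 from by
        rw [show (0:ℤ) = ((0:ℕ):ℤ) from rfl, Bnq_eq r 0 (by omega), gbinom_zero, map_one],
      show Bnq (r+1) 0 = 1 from by
        rw [show (0:ℤ) = ((0:ℕ):ℤ) from rfl, Bnq_eq (r+1) 0 (by omega), gbinom_zero, map_one],
      Int.toNat_natCast, Cexp_s1 r, oddX r]
    ring
  · -- i = r + 1
    rcases r with _ | m
    · norm_num [Bnq, Cexp]
      rw [gbinom_zero, gbinom_self, map_one]
      ring
    · rw [show ((m+1:ℕ):ℤ) - ((m+1+1:ℕ):ℤ) = -1 from by push_cast; ring,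
        show (-1:ℤ) + 1 = 0 from by ring, show (-1:ℤ) + 2 = 1 from by ring,
        show ((m+1+1:ℕ):ℤ) - 1 = ((m+1:ℕ):ℤ) from by push_cast; ring,
        show ((m+1+1:ℕ):ℤ) - 2 = ((m:ℕ):ℤ) from by push_cast; ring,
        Bnq_neg (m+1) ((m+1+1:ℕ):ℤ) (by omega),
        Bnq_eq (m+1) (m+1) le_rfl, gbinom_self, map_one,
        Bnq_eq (m+1) m (by omega),
        Bnq_eq (m+1+1) (m+1+1) le_rfl, gbinom_self, map_one,
        show ((-1:ℤ)).toNat = 0 from rfl, show ((1:ℤ)).toNat = 1 from rfl,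
        show Cexp (-1) = 1 from rfl, show Cexp 0 = 0 from rfl, show Cexp 1 = 0 from rfl, hX1]
      have E := congrArg (aeval (-(X:Polynomial ℤ))) (gbinom_two m)
      simp only [map_add, map_mul, map_sub, map_one, map_pow, aeval_X] at E
      linear_combination E
  · -- i = 1, r = m+1
    obtain ⟨m, rfl⟩ : ∃ m, r = m+1 := ⟨r-1, by omega⟩
    rw [show ((m+1:ℕ):ℤ) - ((1:ℕ):ℤ) = ((m:ℕ):ℤ) from by push_cast; ring]
    rw [show ((1:ℕ):ℤ) - 1 = 0 from by norm_num, show ((1:ℕ):ℤ) - 2 = -1 from by norm_num]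
    rw [Bnq_neg (m+1) (-1) (by omega),
      Bnq_eq (m+1) 1 (by omega), Bnq_eq (m+1+1) 1 (by omega),
      show Bnq (m+1) 0 = 1 from by
        rw [show (0:ℤ) = ((0:ℕ):ℤ) from rfl, Bnq_eq (m+1) 0 (by omega), gbinom_zero, map_one],
      Int.toNat_natCast,
      show ((m:ℕ):ℤ) + 2 = ((m+2:ℕ):ℤ) from by push_cast; ring, Int.toNat_natCast,
      show ((m+2:ℕ):ℤ) = ((m:ℕ):ℤ) + 2 from by push_cast; ring,
      Cexp_s1 m, Cexp_s2 m, oddX (m+1), hX1]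
    have E := congrArg (aeval (-(X:Polynomial ℤ))) (core1 m)
    simp only [map_add, map_mul, map_sub, map_one, map_pow, aeval_X] at E
    linear_combination (-(X:Polynomial ℤ))^(Cexp ((m:ℕ):ℤ) + m) * E
  · -- 2 ≤ i ≤ r
    obtain ⟨j, rfl⟩ : ∃ j, i = j+2 := ⟨i-2, by omega⟩
    obtain ⟨m, rfl⟩ : ∃ m, r = m+j+2 := ⟨r-(j+2), by omega⟩
    rw [show ((m+j+2:ℕ):ℤ) - ((j+2:ℕ):ℤ) = ((m:ℕ):ℤ) from by push_cast; ring]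
    rw [show ((j+2:ℕ):ℤ) - 1 = ((j+1:ℕ):ℤ) from by push_cast; ring,
      show ((j+2:ℕ):ℤ) - 2 = ((j:ℕ):ℤ) from by push_cast; ring]
    rw [Bnq_eq (m+j+2) (j+2) (by omega), Bnq_eq (m+j+2) (j+1) (by omega),
      Bnq_eq (m+j+2) j (by omega), Bnq_eq (m+j+2+1) (j+2) (by omega),
      show m+j+2+1 = m+j+3 from rfl,
      Int.toNat_natCast,
      show ((m:ℕ):ℤ) + 2 = ((m+2:ℕ):ℤ) from by push_cast; ring, Int.toNat_natCast,
      show ((m+2:ℕ):ℤ) = ((m:ℕ):ℤ) + 2 from by push_cast; ring,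
      Cexp_s1 m, Cexp_s2 m, oddX (m+j+2), hX1]
    have E := congrArg (aeval (-(X:Polynomial ℤ))) (core2 m j)
    simp only [map_add, map_mul, map_sub, map_one, map_pow, aeval_X] at E
    linear_combination (-(X:Polynomial ℤ))^(Cexp ((m:ℕ):ℤ) + m) * E
end

section
/- Let M be the free ℤ[q]-module with basis {δ_e : e ∈ ℤ}, and let N ⊆ M be the submodule generated by δ_{−1} − q²·δ_1 together with the elements δ_{−m} − q²·δ_{−m+2} − q^{m+1}·δ_m + q^{m−1}·δ_{m−2} for all m ≥ 2. Then the quotient M/N is a free ℤ[q]-module, and the images of δ_e for e ≥ 0 form a ℤ[q]-basis of M/N. -/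
open Polynomial

/-- The submodule of relations `Rel^φ(m)`, `m ≥ 1`, inside the free `ℤ[q]`-module
`⨁_{e ∈ ℤ} ℤ[q]·δ_e`: generated by `δ_{−1} − q²δ_1` and, for `m ≥ 2`, by
`δ_{−m} − q²δ_{−m+2} − q^{m+1}δ_m + q^{m−1}δ_{m−2}`. -/
noncomputable def relPhi : Submodule (Polynomial ℤ) (ℤ →₀ Polynomial ℤ) :=
  Submodule.span (Polynomial ℤ)
    ({Finsupp.single (-1 : ℤ) (1 : Polynomial ℤ) - Finsupp.single (1 : ℤ) (X ^ 2)} ∪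
      {g | ∃ m : ℕ, 2 ≤ m ∧
        g = Finsupp.single (-(m : ℤ)) (1 : Polynomial ℤ) -
              Finsupp.single (-(m : ℤ) + 2) (X ^ 2) -
              Finsupp.single ((m : ℤ)) (X ^ (m + 1)) +
              Finsupp.single ((m : ℤ) - 2) (X ^ (m - 1))})

/-- free module on nonnegative indices -/
noncomputable abbrev FreeNN := ({e : ℤ // 0 ≤ e} →₀ Polynomial ℤ)

/-- straightened value of δ_{-m} -/
noncomputable def gstr : ℕ → FreeNN
  | 0 => Finsupp.single ⟨0, le_refl 0⟩ 1
  | 1 => Finsupp.single ⟨1, by norm_num⟩ (X ^ 2)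
  | (k+2) => (X ^ 2 : Polynomial ℤ) • gstr k + Finsupp.single ⟨(k : ℤ) + 2, by positivity⟩ (X ^ (k + 3))
      - Finsupp.single ⟨(k : ℤ), Int.ofNat_nonneg k⟩ (X ^ (k + 1))

/-- straightened value of δ_e -/
noncomputable def fstr (e : ℤ) : FreeNN :=
  if h : 0 ≤ e then Finsupp.single ⟨e, h⟩ 1 else gstr e.natAbs

lemma fstr_neg (m : ℕ) : fstr (-(m : ℤ)) = gstr m := by
  cases m with
  | zero => simp [fstr, gstr]
  | succ k =>
    have h : (-(((k+1):ℕ) : ℤ)).natAbs = k + 1 := by omega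
    rw [fstr, dif_neg (by omega), h]

lemma fstr_nonneg {e : ℤ} (h : 0 ≤ e) : fstr e = Finsupp.single ⟨e, h⟩ 1 := by
  rw [fstr, dif_pos h]

/-- the straightening map -/
noncomputable def Tstr : (ℤ →₀ Polynomial ℤ) →ₗ[Polynomial ℤ] FreeNN :=
  Finsupp.lsum (Polynomial ℤ) fun e => LinearMap.toSpanSingleton _ _ (fstr e)

lemma Tstr_single (e : ℤ) (p : Polynomial ℤ) : Tstr (Finsupp.single e p) = p • fstr e := by
  rw [Tstr, Finsupp.lsum_single, LinearMap.toSpanSingleton_apply]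

lemma rel_le_ker : relPhi ≤ LinearMap.ker Tstr := by
  rw [relPhi, Submodule.span_le]
  rintro x (hx | ⟨m, hm, rfl⟩)
  · rw [Set.mem_singleton_iff] at hx
    subst hx
    simp only [SetLike.mem_coe, LinearMap.mem_ker, map_sub, Tstr_single]
    have h1 : fstr (-1 : ℤ) = gstr 1 := by
      have := fstr_neg 1; norm_num at this ⊢; exact this
    rw [h1, fstr_nonneg (by norm_num : (0:ℤ) ≤ 1), gstr]
    rw [Finsupp.smul_single, Finsupp.smul_single]
    simp
  · obtain ⟨k, rfl⟩ : ∃ k, m = k + 2 := ⟨m - 2, by omega⟩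
    simp only [SetLike.mem_coe, LinearMap.mem_ker, map_add, map_sub, Tstr_single]
    have h1 : fstr (-((k + 2 : ℕ) : ℤ)) = gstr (k + 2) := fstr_neg (k + 2)
    have h2 : fstr (-((k + 2 : ℕ) : ℤ) + 2) = gstr k := by
      have := fstr_neg k
      rw [← this]; congr 1; push_cast; ring
    have h3 : fstr (((k + 2 : ℕ) : ℤ)) = Finsupp.single ⟨((k:ℤ)+2), by positivity⟩ 1 := by
      rw [fstr_nonneg (by positivity)]
      congr 1
    have h4 : fstr (((k + 2 : ℕ) : ℤ) - 2) = Finsupp.single ⟨(k:ℤ), Int.ofNat_nonneg k⟩ 1 := by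
      have : ((k + 2 : ℕ) : ℤ) - 2 = (k : ℤ) := by push_cast; ring
      rw [this, fstr_nonneg (Int.ofNat_nonneg k)]
    rw [h1, h2, h3, h4]
    have he1 : k + 2 + 1 = k + 3 := by ring
    have he2 : k + 2 - 1 = k + 1 := by omega
    rw [he1, he2, gstr]
    simp only [Finsupp.smul_single, smul_eq_mul, mul_one, one_smul]
    abel

/-- the section map -/
noncomputable def sstr : FreeNN →ₗ[Polynomial ℤ] ((ℤ →₀ Polynomial ℤ) ⧸ relPhi) :=
  Finsupp.lsum (Polynomial ℤ) fun e =>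
    LinearMap.toSpanSingleton _ _ (relPhi.mkQ (Finsupp.single e.1 1))

lemma sstr_single (e : {e : ℤ // 0 ≤ e}) (p : Polynomial ℤ) :
    sstr (Finsupp.single e p) = relPhi.mkQ (Finsupp.single e.1 p) := by
  simp only [sstr, Finsupp.lsum_single, LinearMap.toSpanSingleton_apply,
    ← Submodule.mkQ_apply, ← map_smul]
  congr 1
  rw [Finsupp.smul_single, smul_eq_mul, mul_one]

lemma sstr_gstr : ∀ m : ℕ, sstr (gstr m) = relPhi.mkQ (Finsupp.single (-(m : ℤ)) 1)
  | 0 => by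
    rw [gstr, sstr_single]; norm_num
  | 1 => by
    rw [gstr, sstr_single, eq_comm]
    rw [Submodule.mkQ_apply, Submodule.mkQ_apply, Submodule.Quotient.eq]
    exact Submodule.subset_span (Set.mem_union_left _ rfl)
  | (k+2) => by
    rw [gstr]
    simp only [map_add, map_sub, map_smul, sstr_gstr k, sstr_single]
    simp only [Submodule.mkQ_apply, ← Submodule.Quotient.mk_smul, ← Submodule.Quotient.mk_add,
      ← Submodule.Quotient.mk_sub]
    rw [eq_comm, Submodule.Quotient.eq]
    apply Submodule.subset_span
    right
    refine ⟨k + 2, by omega, ?_⟩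
    have he2 : k + 2 - 1 = k + 1 := by omega
    rw [he2]
    rw [Finsupp.smul_single, smul_eq_mul, mul_one]
    push_cast
    have h1 : -((k : ℤ) + 2) + 2 = -(k : ℤ) := by ring
    have h2 : (k : ℤ) + 2 - 2 = (k : ℤ) := by ring
    rw [h1, h2]
    abel

lemma sstr_fstr (e : ℤ) : sstr (fstr e) = relPhi.mkQ (Finsupp.single e 1) := by
  by_cases h : 0 ≤ e
  · rw [fstr_nonneg h, sstr_single]
  · rw [fstr, dif_neg h]
    have heq : -((e.natAbs : ℕ) : ℤ) = e := by omega
    rw [sstr_gstr, heq]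

/-- the straightening map on the quotient -/
noncomputable def Tbar : ((ℤ →₀ Polynomial ℤ) ⧸ relPhi) →ₗ[Polynomial ℤ] FreeNN :=
  relPhi.liftQ Tstr rel_le_ker

lemma Tbar_mkQ (x : ℤ →₀ Polynomial ℤ) : Tbar (relPhi.mkQ x) = Tstr x := rfl

lemma Tbar_sstr : Tbar ∘ₗ sstr = LinearMap.id := by
  apply Finsupp.lhom_ext
  intro e b
  simp only [LinearMap.comp_apply, LinearMap.id_apply, sstr_single, Tbar_mkQ, Tstr_single,
    fstr_nonneg e.2]
  rw [Finsupp.smul_single, smul_eq_mul, mul_one]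

lemma sstr_Tbar : sstr ∘ₗ Tbar = LinearMap.id := by
  apply Submodule.linearMap_qext
  apply Finsupp.lhom_ext
  intro e b
  show sstr (Tbar (relPhi.mkQ (Finsupp.single e b))) = relPhi.mkQ (Finsupp.single e b)
  rw [Tbar_mkQ, Tstr_single, map_smul, sstr_fstr, ← map_smul]
  congr 1
  rw [Finsupp.smul_single, smul_eq_mul, mul_one]

/-- the quotient is equivalent to the free module on nonnegative indices -/
noncomputable def Estr : ((ℤ →₀ Polynomial ℤ) ⧸ relPhi) ≃ₗ[Polynomial ℤ] FreeNN :=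
  LinearEquiv.ofLinear Tbar sstr Tbar_sstr sstr_Tbar

/-- the quotient of the free `ℤ[q]`-module on `{δ_e : e ∈ ℤ}` by the
relations `Rel^φ(m)` is free, with basis the images of the `δ_e` for `e ≥ 0`. -/
theorem stmt11 :
    Module.Free (Polynomial ℤ) ((ℤ →₀ Polynomial ℤ) ⧸ relPhi) ∧
    LinearIndependent (Polynomial ℤ)
      (fun e : {e : ℤ // 0 ≤ e} => relPhi.mkQ (Finsupp.single e.1 (1 : Polynomial ℤ))) ∧
    Submodule.span (Polynomial ℤ)
        (Set.range fun e : {e : ℤ // 0 ≤ e} =>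
          relPhi.mkQ (Finsupp.single e.1 (1 : Polynomial ℤ))) = ⊤ := by
  have hinj : Function.Injective sstr :=
    Function.LeftInverse.injective (g := Tbar) (fun x => LinearMap.congr_fun Tbar_sstr x)
  have hsurj : Function.Surjective sstr :=
    Function.RightInverse.surjective (g := Tbar) (fun x => LinearMap.congr_fun sstr_Tbar x)
  have hfam : (fun e : {e : ℤ // 0 ≤ e} => relPhi.mkQ (Finsupp.single e.1 (1 : Polynomial ℤ)))
      = sstr ∘ (fun e : {e : ℤ // 0 ≤ e} => Finsupp.single e (1 : Polynomial ℤ)) := by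
    funext e
    simp [sstr_single]
  refine ⟨Module.Free.of_equiv Estr.symm, ?_, ?_⟩
  · rw [hfam]
    exact ((Finsupp.basisSingleOne (R := Polynomial ℤ)
      (ι := {e : ℤ // 0 ≤ e})).linearIndependent).map' sstr (LinearMap.ker_eq_bot.2 hinj)
  · rw [hfam, Set.range_comp, Submodule.span_image]
    have : Submodule.span (Polynomial ℤ)
        (Set.range fun e : {e : ℤ // 0 ≤ e} => Finsupp.single e (1 : Polynomial ℤ)) = ⊤ := by
      have := (Finsupp.basisSingleOne (R := Polynomial ℤ) (ι := {e : ℤ // 0 ≤ e})).span_eq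
      simpa [Finsupp.coe_basisSingleOne] using this
    rw [this, Submodule.map_top, LinearMap.range_eq_top.2 hsurj]
end

section
/- Let M be the free ℤ[q]-module with basis {δ_e : e ∈ ℤ}, and let N ⊆ M be the submodule generated by δ_{−1} − δ_1 together with the elements δ_{−m} − δ_{−m+2} − q^{m−1}·(δ_m − δ_{m−2}) for all m ≥ 2. Then the quotient M/N is a free ℤ[q]-module, and the images of δ_e for e ≥ 0 form a ℤ[q]-basis of M/N. -/
open Polynomial

/-- The submodule of relations `Rel^♭(m)`, `m ≥ 1`, inside the free `ℤ[q]`-module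
`⨁_{e ∈ ℤ} ℤ[q]·δ_e`: generated by `δ_{−1} − δ_1` and, for `m ≥ 2`, by
`δ_{−m} − δ_{−m+2} − q^{m−1}(δ_m − δ_{m−2})`. -/
noncomputable def relFlat : Submodule (Polynomial ℤ) (ℤ →₀ Polynomial ℤ) :=
  Submodule.span (Polynomial ℤ)
    ({Finsupp.single (-1 : ℤ) (1 : Polynomial ℤ) - Finsupp.single (1 : ℤ) (1 : Polynomial ℤ)} ∪
      {g | ∃ m : ℕ, 2 ≤ m ∧
        g = Finsupp.single (-(m : ℤ)) (1 : Polynomial ℤ) -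
              Finsupp.single (-(m : ℤ) + 2) (1 : Polynomial ℤ) -
              Finsupp.single ((m : ℤ)) (X ^ (m - 1)) +
              Finsupp.single ((m : ℤ) - 2) (X ^ (m - 1))})

namespace Stmt12Aux

abbrev M' : Type := {e : ℤ // 0 ≤ e} →₀ Polynomial ℤ

noncomputable def δ (n : ℕ) : M' :=
  Finsupp.single (⟨(n : ℤ), Int.ofNat_nonneg n⟩ : {e : ℤ // 0 ≤ e}) 1

noncomputable def t : ℕ → M'
  | 0 => δ 0
  | 1 => δ 1
  | (n+2) => t n + (X ^ (n+1) : Polynomial ℤ) • (δ (n+2) - δ n)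

noncomputable def f (e : ℤ) : M' :=
  if h : 0 ≤ e then Finsupp.single ⟨e, h⟩ 1 else t (-e).toNat

noncomputable def φ : (ℤ →₀ Polynomial ℤ) →ₗ[Polynomial ℤ] M' :=
  Finsupp.linearCombination (Polynomial ℤ) f

noncomputable def ψ : M' →ₗ[Polynomial ℤ] ((ℤ →₀ Polynomial ℤ) ⧸ relFlat) :=
  Finsupp.linearCombination (Polynomial ℤ)
    (fun e : {e : ℤ // 0 ≤ e} => relFlat.mkQ (Finsupp.single e.1 (1 : Polynomial ℤ)))

lemma f_nonneg (e : ℤ) (h : 0 ≤ e) : f e = Finsupp.single ⟨e, h⟩ 1 := dif_pos h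

lemma f_nat (n : ℕ) : f ((n : ℤ)) = δ n := f_nonneg _ (Int.ofNat_nonneg n)

lemma f_neg_all (m : ℕ) : f (-(m : ℤ)) = t m := by
  rcases Nat.eq_zero_or_pos m with h | h
  · subst h; simpa [t, δ] using f_nat 0
  · have hn : ¬ (0 ≤ -(m : ℤ)) := by omega
    rw [f, dif_neg hn]
    congr 1
    omega

lemma φ_single (e : ℤ) : φ (Finsupp.single e 1) = f e := by
  rw [φ, Finsupp.linearCombination_single, one_smul]

lemma φ_rel : relFlat ≤ LinearMap.ker φ := by
  rw [relFlat, Submodule.span_le]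
  rintro g (rfl | ⟨m, hm, rfl⟩) <;>
    simp only [SetLike.mem_coe, LinearMap.mem_ker, map_sub, map_add, φ,
      Finsupp.linearCombination_single, one_smul]
  · have h1 : (-1 : ℤ) = -((1:ℕ) : ℤ) := by norm_num
    have h2 : (1 : ℤ) = ((1:ℕ) : ℤ) := by norm_num
    rw [h1, h2, f_neg_all 1, f_nat 1, t, sub_self]
  · obtain ⟨n, rfl⟩ : ∃ n, m = n + 2 := ⟨m - 2, by omega⟩
    have e2 : (-((n+2:ℕ) : ℤ) + 2) = -((n:ℕ) : ℤ) := by push_cast; ring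
    have e3 : (((n+2:ℕ) : ℤ) - 2) = ((n:ℕ) : ℤ) := by push_cast; ring
    have he : (n + 2) - 1 = n + 1 := rfl
    rw [e2, e3, he, f_neg_all (n+2), f_neg_all n, f_nat n]
    have hX : f ((n+2:ℕ) : ℤ) = δ (n+2) := f_nat (n+2)
    have hsm : ∀ (k : ℕ) (p : Polynomial ℤ),
        Finsupp.single (⟨(k:ℤ), Int.ofNat_nonneg k⟩ : {e : ℤ // 0 ≤ e}) p = p • δ k := by
      intro k p
      rw [δ, Finsupp.smul_single, smul_eq_mul, mul_one]
    show t (n+2) - t n - X ^ (n+1) • f ((n+2:ℕ) : ℤ) + X ^ (n+1) • δ n = 0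
    rw [hX, t, smul_sub]
    abel

lemma mkδ (n : ℕ) : ψ (δ n) = relFlat.mkQ (Finsupp.single ((n : ℤ)) 1) := by
  rw [δ, ψ, Finsupp.linearCombination_single, one_smul]

lemma ψ_t (n : ℕ) : ψ (t n) = relFlat.mkQ (Finsupp.single (-(n : ℤ)) 1) := by
  induction n using Nat.strong_induction_on with
  | _ n ih =>
    match n with
    | 0 => rw [t, mkδ 0]; norm_num
    | 1 =>
      rw [t, mkδ 1]
      have hmem : Finsupp.single (-1 : ℤ) (1 : Polynomial ℤ) - Finsupp.single (1 : ℤ) 1 ∈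
          relFlat := Submodule.subset_span (Or.inl rfl)
      have h : Finsupp.single (((1:ℕ)) : ℤ) (1 : Polynomial ℤ) -
          Finsupp.single (-((1:ℕ) : ℤ)) 1 ∈ relFlat := by
        have := relFlat.neg_mem hmem
        rw [neg_sub] at this
        convert this using 2 <;> simp
      exact (Submodule.Quotient.eq relFlat).2 h
    | (n+2) =>
      rw [t, map_add, map_smul, map_sub, ih n (by omega), mkδ, mkδ]
      have hrel : Finsupp.single (-(((n+2:ℕ)) : ℤ)) (1 : Polynomial ℤ) -
          Finsupp.single (-(((n+2:ℕ)) : ℤ) + 2) 1 -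
          Finsupp.single (((n+2:ℕ)) : ℤ) (X ^ ((n+2) - 1)) +
          Finsupp.single ((((n+2:ℕ)) : ℤ) - 2) (X ^ ((n+2) - 1)) ∈ relFlat :=
        Submodule.subset_span (Or.inr ⟨n+2, by omega, rfl⟩)
      have he : (n+2) - 1 = n + 1 := rfl
      have e2 : (-(((n+2:ℕ)) : ℤ) + 2) = -((n:ℕ) : ℤ) := by push_cast; ring
      have e3 : ((((n+2:ℕ)) : ℤ) - 2) = ((n:ℕ) : ℤ) := by push_cast; ring
      rw [he, e2, e3] at hrel
      rw [eq_comm, ← sub_eq_zero]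
      have hkey : relFlat.mkQ (Finsupp.single (-(((n+2:ℕ)) : ℤ)) (1 : Polynomial ℤ) -
          Finsupp.single (-((n:ℕ) : ℤ)) 1 -
          Finsupp.single (((n+2:ℕ)) : ℤ) (X ^ (n+1)) +
          Finsupp.single ((n:ℕ) : ℤ) (X ^ (n+1))) = 0 := by
        rw [Submodule.mkQ_apply, Submodule.Quotient.mk_eq_zero]
        exact hrel
      rw [map_add, map_sub, map_sub] at hkey
      have s1 : Finsupp.single ((n:ℤ)) (X ^ (n+1) : Polynomial ℤ) =
          (X ^ (n+1) : Polynomial ℤ) • Finsupp.single ((n:ℤ)) (1 : Polynomial ℤ) := by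
        rw [Finsupp.smul_single, smul_eq_mul, mul_one]
      have s2 : Finsupp.single (((n+2:ℕ)):ℤ) (X ^ (n+1) : Polynomial ℤ) =
          (X ^ (n+1) : Polynomial ℤ) • Finsupp.single (((n+2:ℕ)):ℤ) (1 : Polynomial ℤ) := by
        rw [Finsupp.smul_single, smul_eq_mul, mul_one]
      rw [s1, s2, map_smul, map_smul] at hkey
      rw [← hkey, smul_sub]
      abel

noncomputable def φbar : ((ℤ →₀ Polynomial ℤ) ⧸ relFlat) →ₗ[Polynomial ℤ] M' :=
  relFlat.liftQ φ φ_rel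

lemma φbar_mkQ (x : ℤ →₀ Polynomial ℤ) : φbar (relFlat.mkQ x) = φ x :=
  Submodule.liftQ_apply _ _ _

lemma comp1 : φbar.comp ψ = LinearMap.id := by
  apply Finsupp.lhom_ext
  intro a b
  rw [LinearMap.comp_apply, LinearMap.id_apply, ψ, Finsupp.linearCombination_single,
    map_smul, φbar_mkQ, φ_single, f_nonneg a.1 a.2, Finsupp.smul_single, smul_eq_mul,
    mul_one]

lemma comp2 : ψ.comp φbar = LinearMap.id := by
  have h : (ψ.comp φbar).comp relFlat.mkQ = LinearMap.id.comp relFlat.mkQ := by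
    apply Finsupp.lhom_ext
    intro e b
    rw [LinearMap.comp_apply, LinearMap.comp_apply, LinearMap.comp_apply, LinearMap.id_apply,
      φbar_mkQ]
    have hb : (Finsupp.single e b : ℤ →₀ Polynomial ℤ) = b • Finsupp.single e 1 := by
      rw [Finsupp.smul_single, smul_eq_mul, mul_one]
    rw [hb, map_smul, map_smul, map_smul, φ_single]
    congr 1
    rcases le_or_gt 0 e with h0 | h0
    · rw [f_nonneg e h0, ψ, Finsupp.linearCombination_single, one_smul]
    · have : e = -(((-e).toNat : ℕ) : ℤ) := by omega
      rw [this, f_neg_all, ψ_t]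
  refine LinearMap.ext fun x => ?_
  obtain ⟨y, rfl⟩ := relFlat.mkQ_surjective x
  exact LinearMap.congr_fun h y

noncomputable def equiv : ((ℤ →₀ Polynomial ℤ) ⧸ relFlat) ≃ₗ[Polynomial ℤ] M' :=
  LinearEquiv.ofLinear φbar ψ comp1 comp2

noncomputable def qbasis :
    Module.Basis {e : ℤ // 0 ≤ e} (Polynomial ℤ) ((ℤ →₀ Polynomial ℤ) ⧸ relFlat) :=
  Finsupp.basisSingleOne.map equiv.symm

lemma qbasis_apply (e : {e : ℤ // 0 ≤ e}) :
    qbasis e = relFlat.mkQ (Finsupp.single e.1 (1 : Polynomial ℤ)) := by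
  rw [qbasis, Module.Basis.map_apply, Finsupp.coe_basisSingleOne]
  show ψ _ = _
  rw [ψ, Finsupp.linearCombination_single, one_smul]

end Stmt12Aux


/-- the quotient of the free `ℤ[q]`-module on `{δ_e : e ∈ ℤ}` by the
relations `Rel^♭(m)` is free, with basis the images of the `δ_e` for `e ≥ 0`. -/
theorem stmt12 :
    Module.Free (Polynomial ℤ) ((ℤ →₀ Polynomial ℤ) ⧸ relFlat) ∧
    LinearIndependent (Polynomial ℤ)
      (fun e : {e : ℤ // 0 ≤ e} => relFlat.mkQ (Finsupp.single e.1 (1 : Polynomial ℤ))) ∧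
    Submodule.span (Polynomial ℤ)
        (Set.range fun e : {e : ℤ // 0 ≤ e} =>
          relFlat.mkQ (Finsupp.single e.1 (1 : Polynomial ℤ))) = ⊤ := by
  have hb : ⇑Stmt12Aux.qbasis =
      (fun e : {e : ℤ // 0 ≤ e} => relFlat.mkQ (Finsupp.single e.1 (1 : Polynomial ℤ))) :=
    funext Stmt12Aux.qbasis_apply
  refine ⟨Module.Free.of_basis Stmt12Aux.qbasis, ?_, ?_⟩
  · rw [← hb]; exact Stmt12Aux.qbasis.linearIndependent
  · rw [← hb]; exact Stmt12Aux.qbasis.span_eq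
end
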